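/- arXiv:2211.07570 — 2 statements merged into one kernel-verified Lean document; each statement's English description precedes it below -/
import Mathlib

section
/- Let V be a finite set of nodes. For i = 1, 2 and each v ∈ V let D_i(v) be a Finset of events, where each event x carries a time t(x) ∈ ℝ and a weight η(x) ≥ 0. Let δ > 0, let μ : ℝ → ℝ, let K ≥ 0, and let A : V → ℝ → ℝ satisfy 0 ≤ A(v)(τ) ≤ K for all v ∈ V and τ ∈ ℝ. Define λ_i(τ) = μ(τ) + Σ_{v∈V} A(v)(τ) · Σ_{x∈D_i(v)} η(x) · Real.exp (−δ · (τ − t(x))) for i = 1, 2. Suppose T ∈ ℝ is such that every event x in every symmetric difference (D₁(v) \ D₂(v)) ∪ (D₂(v) \ D₁(v)) has t(x) ≤ T. Then for every τ ≥ T, |λ₁(τ) − λ₂(τ)| ≤ K · Real.exp (−δ · (τ − T)) · Σ_{v∈V} Σ_{x ∈ (D₁(v) \ D₂(v)) ∪ (D₂(v) \ D₁(v))} η(x). -/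
/-- Quantitative version of Theorem 4.1: if all discrepant events have times at most
`T`, then for `τ ≥ T` the discrepancy between the two intensities decays at rate
`exp (-δ (τ - T))`. -/
theorem stmt_9 {V : Type*} [Fintype V] {E : Type*} [DecidableEq E]
    (D₁ D₂ : V → Finset E) (t η : E → ℝ) (hη : ∀ x, 0 ≤ η x)
    (δ : ℝ) (hδ : 0 < δ) (μ : ℝ → ℝ) (K : ℝ) (hK : 0 ≤ K)
    (A : V → ℝ → ℝ) (hA : ∀ (v : V) (τ : ℝ), 0 ≤ A v τ ∧ A v τ ≤ K)
    (T : ℝ)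
    (hdiff : ∀ v : V, ∀ x ∈ (D₁ v \ D₂ v) ∪ (D₂ v \ D₁ v), t x ≤ T) :
    ∀ τ : ℝ, T ≤ τ →
      |(μ τ + ∑ v, A v τ * ∑ x ∈ D₁ v, η x * Real.exp (-δ * (τ - t x))) -
          (μ τ + ∑ v, A v τ * ∑ x ∈ D₂ v, η x * Real.exp (-δ * (τ - t x)))| ≤
        K * Real.exp (-δ * (τ - T)) *
          ∑ v, ∑ x ∈ (D₁ v \ D₂ v) ∪ (D₂ v \ D₁ v), η x := by
  intro τ hτ
  set f : E → ℝ := fun x => η x * Real.exp (-δ * (τ - t x)) with hf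
  have hbound : ∀ v : V, ∀ x ∈ (D₁ v \ D₂ v) ∪ (D₂ v \ D₁ v),
      |f x| ≤ η x * Real.exp (-δ * (τ - T)) := by
    intro v x hx
    have hx' := hdiff v x hx
    have hexp : Real.exp (-δ * (τ - t x)) ≤ Real.exp (-δ * (τ - T)) := by
      apply Real.exp_le_exp.2
      nlinarith
    rw [abs_of_nonneg (mul_nonneg (hη x) (Real.exp_pos _).le)]
    exact mul_le_mul_of_nonneg_left hexp (hη x)
  have key : ∀ v : V,
      |(∑ x ∈ D₁ v, f x) - ∑ x ∈ D₂ v, f x| ≤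
        Real.exp (-δ * (τ - T)) * ∑ x ∈ (D₁ v \ D₂ v) ∪ (D₂ v \ D₁ v), η x := by
    intro v
    rw [← Finset.sum_sdiff_sub_sum_sdiff]
    calc |(∑ x ∈ D₁ v \ D₂ v, f x) - ∑ x ∈ D₂ v \ D₁ v, f x|
        ≤ |∑ x ∈ D₁ v \ D₂ v, f x| + |∑ x ∈ D₂ v \ D₁ v, f x| := abs_sub _ _
      _ ≤ (∑ x ∈ D₁ v \ D₂ v, |f x|) + ∑ x ∈ D₂ v \ D₁ v, |f x| :=
          add_le_add (Finset.abs_sum_le_sum_abs _ _) (Finset.abs_sum_le_sum_abs _ _)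
      _ = ∑ x ∈ (D₁ v \ D₂ v) ∪ (D₂ v \ D₁ v), |f x| := by
          rw [Finset.sum_union (Finset.sdiff_disjoint.mono_right (Finset.sdiff_subset))]
      _ ≤ ∑ x ∈ (D₁ v \ D₂ v) ∪ (D₂ v \ D₁ v), η x * Real.exp (-δ * (τ - T)) :=
          Finset.sum_le_sum (hbound v)
      _ = Real.exp (-δ * (τ - T)) * ∑ x ∈ (D₁ v \ D₂ v) ∪ (D₂ v \ D₁ v), η x := by
          rw [Finset.mul_sum]; simp [mul_comm]
  calc |(μ τ + ∑ v, A v τ * ∑ x ∈ D₁ v, f x) - (μ τ + ∑ v, A v τ * ∑ x ∈ D₂ v, f x)|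
      = |∑ v, A v τ * ((∑ x ∈ D₁ v, f x) - ∑ x ∈ D₂ v, f x)| := by
        congr 1; rw [add_sub_add_left_eq_sub, ← Finset.sum_sub_distrib]; exact Finset.sum_congr rfl fun v _ => (mul_sub _ _ _).symm
    _ ≤ ∑ v, |A v τ * ((∑ x ∈ D₁ v, f x) - ∑ x ∈ D₂ v, f x)| :=
        Finset.abs_sum_le_sum_abs _ _
    _ ≤ ∑ v, K * (Real.exp (-δ * (τ - T)) * ∑ x ∈ (D₁ v \ D₂ v) ∪ (D₂ v \ D₁ v), η x) := by
        apply Finset.sum_le_sum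
        intro v _
        rw [abs_mul, abs_of_nonneg (hA v τ).1]
        exact mul_le_mul (hA v τ).2 (key v) (abs_nonneg _)
          hK
    _ = K * Real.exp (-δ * (τ - T)) * ∑ v, ∑ x ∈ (D₁ v \ D₂ v) ∪ (D₂ v \ D₁ v), η x := by
        rw [Finset.mul_sum]; congr 1; ext v; ring
end

section
/- Let n ≥ 1 and let h : Fin (n+1) → ℝ be strictly monotone with h(0) = 0 and h(n) = T. Let δ > 0 and α ∈ ℝ, let μ̂, θ̂ : Fin n → ℝ, and let X be a Finset of events where each event x carries a time t(x) ∈ ℝ and a weight w(x) ∈ ℝ. Define λ : ℝ → ℝ so that for each i ∈ {1, …, n} and each z ∈ (h(i−1), h(i)], λ(z) = μ̂(i) + α · θ̂(i) · Σ_{x∈X, t(x) ≤ h(i−1)} w(x) · Real.exp (−δ · (z − t(x))). Then the interval integral ∫_0^T λ(z) dz equals Σ_{i=1}^{n} [ μ̂(i) · (h(i) − h(i−1)) + (α/δ) · θ̂(i) · Σ_{x∈X, t(x) ≤ h(i−1)} w(x) · (Real.exp (−δ · (h(i−1) − t(x))) − Real.exp (−δ · (h(i) − t(x)))) ]. -/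
/-!
On each inter-event interval `(h (i-1), h i]` the intensity coincides with a continuous
function: a constant plus a finite combination of exponentials `exp (-δ (z - t x))`, whose
integral is `(exp (-δ (a - t x)) - exp (-δ (b - t x))) / δ`. Splitting `[0, T]` at the event
times and integrating piece by piece gives the closed form.
-/

open MeasureTheory Set
open scoped Interval

open Fin.NatCast in
theorem Fin.sum_intervalIntegral_adjacent {E : Type*} [NormedAddCommGroup E] [NormedSpace ℝ E]
    {μ : Measure ℝ} {f : ℝ → E} {n : ℕ} (a : Fin (n + 1) → ℝ)
    (hf : ∀ i : Fin n, IntervalIntegrable f μ (a i.castSucc) (a i.succ)) :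
    ∑ i : Fin n, ∫ x in a i.castSucc..a i.succ, f x ∂μ = ∫ x in a 0..a (Fin.last n), f x ∂μ := by
  have hcast (i : Fin n) :
      ((i : ℕ) : Fin (n + 1)) = i.castSucc ∧ ((i + 1 : ℕ) : Fin (n + 1)) = i.succ := by
    constructor <;> ext <;> simp
  have hsum := intervalIntegral.sum_integral_adjacent_intervals (μ := μ) (f := f)
    (a := fun k : ℕ => a k) (n := n) fun k hk => by simpa [hcast ⟨k, hk⟩] using hf ⟨k, hk⟩
  rw [← Fin.sum_univ_eq_sum_range] at hsum
  simpa [hcast] using hsum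

theorem integral_exp_neg_mul_sub {δ : ℝ} (hδ : δ ≠ 0) (a b c : ℝ) :
    ∫ z in a..b, Real.exp (-δ * (z - c)) =
      (Real.exp (-δ * (a - c)) - Real.exp (-δ * (b - c))) / δ := by
  simp only [mul_sub]
  rw [intervalIntegral.integral_comp_mul_sub (fun u => Real.exp u) (neg_ne_zero.2 hδ),
    integral_exp, smul_eq_mul]
  field_simp
  ring

theorem integral_const_add_mul_sum_exp {ι : Type*} {δ : ℝ} (hδ : δ ≠ 0) (m κ : ℝ)
    (s : Finset ι) (t w : ι → ℝ) (a b : ℝ) :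
    ∫ z in a..b, (m + κ * ∑ x ∈ s, w x * Real.exp (-δ * (z - t x))) =
      m * (b - a) + κ / δ * ∑ x ∈ s,
        w x * (Real.exp (-δ * (a - t x)) - Real.exp (-δ * (b - t x))) := by
  have hexp (x : ι) : Continuous fun z => w x * Real.exp (-δ * (z - t x)) := by fun_prop
  rw [intervalIntegral.integral_add intervalIntegrable_const
      ((continuous_finsetSum s fun x _ => hexp x).intervalIntegrable a b |>.const_mul κ),
    intervalIntegral.integral_const, intervalIntegral.integral_const_mul,
    intervalIntegral.integral_finsetSum fun x _ => (hexp x).intervalIntegrable a b]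
  simp only [intervalIntegral.integral_const_mul, integral_exp_neg_mul_sub hδ, smul_eq_mul,
    Finset.mul_sum]
  congr 1
  · ring
  · exact Finset.sum_congr rfl fun x _ => by field_simp

theorem stmt_12_general {E : Type*} (n : ℕ)
    (h : Fin (n + 1) → ℝ) (hmono : StrictMono h) (T : ℝ)
    (h0 : h 0 = 0) (hT : h (Fin.last n) = T)
    (δ : ℝ) (hδ : 0 < δ) (α : ℝ) (μhat θhat : Fin n → ℝ)
    (X : Finset E) (t w : E → ℝ)
    (lam : ℝ → ℝ)
    (hlam : ∀ i : Fin n, ∀ z ∈ Set.Ioc (h i.castSucc) (h i.succ),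
      lam z = μhat i + α * θhat i *
        ∑ x ∈ X.filter (fun x => t x ≤ h i.castSucc),
          w x * Real.exp (-δ * (z - t x))) :
    ∫ z in (0 : ℝ)..T, lam z =
      ∑ i : Fin n,
        (μhat i * (h i.succ - h i.castSucc) +
          (α / δ) * θhat i *
            ∑ x ∈ X.filter (fun x => t x ≤ h i.castSucc),
              w x * (Real.exp (-δ * (h i.castSucc - t x)) -
                Real.exp (-δ * (h i.succ - t x)))) := by
  set F : Fin n → ℝ → ℝ := fun i z => μhat i + α * θhat i *
    ∑ x ∈ X.filter (fun x => t x ≤ h i.castSucc), w x * Real.exp (-δ * (z - t x))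
  have hF : ∀ i, EqOn (F i) lam (Ι (h i.castSucc) (h i.succ)) := fun i z hz =>
    (hlam i z (by rwa [uIoc_of_le (hmono i.castSucc_lt_succ).le] at hz)).symm
  have hFcont : ∀ i, Continuous (F i) := fun i => by fun_prop
  rw [← h0, ← hT, ← Fin.sum_intervalIntegral_adjacent h fun i =>
    ((hFcont i).intervalIntegrable _ _).congr (hF i)]
  refine Finset.sum_congr rfl fun i _ => ?_
  rw [← intervalIntegral.integral_congr_ae (ae_of_all _ fun z hz => hF i hz),
    integral_const_add_mul_sum_exp hδ.ne']
  ring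

/-- Proposition A.2: closed form of the compensator integral `∫_0^T λ(z) dz` when the
baseline rate and the connectivity are left-continuous step functions whose
discontinuities coincide with the event times `h 0 = 0 < h 1 < … < h n = T`, and the
temporal kernel is exponential with rate `δ > 0`. -/
theorem stmt_12 {E : Type*} [DecidableEq E] (n : ℕ) (hn : 1 ≤ n)
    (h : Fin (n + 1) → ℝ) (hmono : StrictMono h) (T : ℝ)
    (h0 : h 0 = 0) (hT : h (Fin.last n) = T)
    (δ : ℝ) (hδ : 0 < δ) (α : ℝ) (μhat θhat : Fin n → ℝ)
    (X : Finset E) (t w : E → ℝ)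
    (lam : ℝ → ℝ)
    (hlam : ∀ i : Fin n, ∀ z ∈ Set.Ioc (h i.castSucc) (h i.succ),
      lam z = μhat i + α * θhat i *
        ∑ x ∈ X.filter (fun x => t x ≤ h i.castSucc),
          w x * Real.exp (-δ * (z - t x))) :
    ∫ z in (0 : ℝ)..T, lam z =
      ∑ i : Fin n,
        (μhat i * (h i.succ - h i.castSucc) +
          (α / δ) * θhat i *
            ∑ x ∈ X.filter (fun x => t x ≤ h i.castSucc),
              w x * (Real.exp (-δ * (h i.castSucc - t x)) -
                Real.exp (-δ * (h i.succ - t x)))) :=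
  stmt_12_general n h hmono T h0 hT δ hδ α μhat θhat X t w lam hlam
end
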